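/- Let (C, E, s) be an extriangulated category and let A →^f B →^g C --δ--> and A →^u D →^v E --η--> be two E-triangles together with a morphism of E-triangles (1_A, s, t) from the first to the second. Then the square (g, s; t, v) is a weak pullback: for any morphisms i : M → C and j : M → D with t ∘ i = v ∘ j, there exists l : M → B with s ∘ l = j and g ∘ l = i. -/

import Mathlib

/-!  A self-contained axiomatization of `n`-exangulated categories
(Herschend–Liu–Nakaoka) together with the ideal-approximation notions
(ideals, orthogonals, phantom morphisms, special precovers, etc.). -/

open CategoryTheory

universe v u

/-- An `n`-exangulated structure on a preadditive category `C`: a biadditive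
`Ab`-valued bifunctor `E` together with a class `Dist` of distinguished
`n`-exangles (complexes `X 0 → ⋯ → X (n+1)` with an extension
`δ ∈ E (X (n+1)) (X 0)`), satisfying functoriality, biadditivity, the exactness
conditions defining `n`-exangles, existence of realizations and of lifts. -/
structure NEx (n : ℕ) (C : Type u) [Category.{v} C] [Preadditive C] where
  E : C → C → Type v
  zero : ∀ {X A : C}, E X A
  add : ∀ {X A : C}, E X A → E X A → E X A
  neg : ∀ {X A : C}, E X A → E X A
  pull : ∀ {X X' A : C}, (X' ⟶ X) → E X A → E X' A
  push : ∀ {X A A' : C}, (A ⟶ A') → E X A → E X A'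
  pull_id : ∀ {X A : C} (δ : E X A), pull (𝟙 X) δ = δ
  push_id : ∀ {X A : C} (δ : E X A), push (𝟙 A) δ = δ
  pull_comp : ∀ {X X' X'' A : C} (f : X' ⟶ X) (g : X'' ⟶ X') (δ : E X A),
    pull g (pull f δ) = pull (g ≫ f) δ
  push_comp : ∀ {X A A' A'' : C} (f : A ⟶ A') (g : A' ⟶ A'') (δ : E X A),
    push g (push f δ) = push (f ≫ g) δ
  pull_push : ∀ {X X' A A' : C} (f : X' ⟶ X) (g : A ⟶ A') (δ : E X A),
    pull f (push g δ) = push g (pull f δ)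
  eadd_comm : ∀ {X A : C} (a b : E X A), add a b = add b a
  eadd_assoc : ∀ {X A : C} (a b c : E X A), add (add a b) c = add a (add b c)
  ezero_add : ∀ {X A : C} (a : E X A), add zero a = a
  eneg_add : ∀ {X A : C} (a : E X A), add (neg a) a = zero
  pull_zero : ∀ {X X' A : C} (f : X' ⟶ X), pull f (zero : E X A) = zero
  push_zero : ∀ {X A A' : C} (g : A ⟶ A'), push g (zero : E X A) = zero
  pull_add : ∀ {X X' A : C} (f : X' ⟶ X) (a b : E X A),
    pull f (add a b) = add (pull f a) (pull f b)
  push_add : ∀ {X A A' : C} (g : A ⟶ A') (a b : E X A),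
    push g (add a b) = add (push g a) (push g b)
  pull_zero_mor : ∀ {X X' A : C} (δ : E X A), pull (0 : X' ⟶ X) δ = zero
  push_zero_mor : ∀ {X A A' : C} (δ : E X A), push (0 : A ⟶ A') δ = zero
  pull_add_mor : ∀ {X X' A : C} (f g : X' ⟶ X) (δ : E X A),
    pull (f + g) δ = add (pull f δ) (pull g δ)
  push_add_mor : ∀ {X A A' : C} (f g : A ⟶ A') (δ : E X A),
    push (f + g) δ = add (push f δ) (push g δ)
  Dist : ∀ (X : ℕ → C) (_ : ∀ i, X i ⟶ X (i + 1)), E (X (n + 1)) (X 0) → Prop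
  dist_d_comp : ∀ {X : ℕ → C} {d : ∀ i, X i ⟶ X (i + 1)} {δ : E (X (n + 1)) (X 0)},
    Dist X d δ → ∀ i < n, d i ≫ d (i + 1) = 0
  dist_pull_d : ∀ {X : ℕ → C} {d : ∀ i, X i ⟶ X (i + 1)} {δ : E (X (n + 1)) (X 0)},
    Dist X d δ → pull (d n) δ = zero
  dist_push_d : ∀ {X : ℕ → C} {d : ∀ i, X i ⟶ X (i + 1)} {δ : E (X (n + 1)) (X 0)},
    Dist X d δ → push (d 0) δ = zero
  dist_exact_last : ∀ {X : ℕ → C} {d : ∀ i, X i ⟶ X (i + 1)} {δ : E (X (n + 1)) (X 0)},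
    Dist X d δ → ∀ {T : C} (g : T ⟶ X (n + 1)),
    pull g δ = zero → ∃ h : T ⟶ X n, h ≫ d n = g
  dist_exact_first : ∀ {X : ℕ → C} {d : ∀ i, X i ⟶ X (i + 1)} {δ : E (X (n + 1)) (X 0)},
    Dist X d δ → ∀ {T : C} (g : X 0 ⟶ T),
    push g δ = zero → ∃ h : X 1 ⟶ T, d 0 ≫ h = g
  dist_exact_contra : ∀ {X : ℕ → C} {d : ∀ i, X i ⟶ X (i + 1)} {δ : E (X (n + 1)) (X 0)},
    Dist X d δ → ∀ i < n, ∀ {T : C} (g : T ⟶ X (i + 1)),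
    g ≫ d (i + 1) = 0 → ∃ h : T ⟶ X i, h ≫ d i = g
  dist_exact_cov : ∀ {X : ℕ → C} {d : ∀ i, X i ⟶ X (i + 1)} {δ : E (X (n + 1)) (X 0)},
    Dist X d δ → ∀ i < n, ∀ {T : C} (g : X (i + 1) ⟶ T),
    d i ≫ g = 0 → ∃ h : X (i + 2) ⟶ T, d (i + 1) ≫ h = g
  realize : ∀ {A B : C} (δ : E B A), ∃ (X : ℕ → C) (d : ∀ i, X i ⟶ X (i + 1))
    (hA : X 0 = A) (hB : X (n + 1) = B),
    Dist X d (cast (by rw [hA, hB]) δ)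
  lift : ∀ {X Y : ℕ → C} {dX : ∀ i, X i ⟶ X (i + 1)} {dY : ∀ i, Y i ⟶ Y (i + 1)}
    {δ : E (X (n + 1)) (X 0)} {η : E (Y (n + 1)) (Y 0)},
    Dist X dX δ → Dist Y dY η →
    ∀ (a : X 0 ⟶ Y 0) (c : X (n + 1) ⟶ Y (n + 1)), push a δ = pull c η →
    ∃ f : ∀ i, X i ⟶ Y i, f 0 = a ∧ f (n + 1) = c ∧
      ∀ i ≤ n, dX i ≫ f (i + 1) = f i ≫ dY i

namespace NEx

variable {n : ℕ} {C : Type u} [Category.{v} C] [Preadditive C]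

/-- `E(f, g) = 0` : the composite map `E(A', B) → E(A, B')` induced by
`f : A ⟶ A'` and `g : B ⟶ B'` vanishes. -/
def Evanish (D : NEx n C) {A A' B B' : C} (f : A ⟶ A') (g : B ⟶ B') : Prop :=
  ∀ δ : D.E A' B, D.push g (D.pull f δ) = D.zero

/-- The right orthogonal class `M^⊥ = { g | E(m, g) = 0 for all m ∈ M }`. -/
def rightOrth (D : NEx n C) (M : MorphismProperty C) : MorphismProperty C :=
  fun _ _ g => ∀ ⦃A A' : C⦄ (m : A ⟶ A'), M m → D.Evanish m g

/-- The left orthogonal class `^⊥M = { f | E(f, m) = 0 for all m ∈ M }`. -/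
def leftOrth (D : NEx n C) (M : MorphismProperty C) : MorphismProperty C :=
  fun _ _ f => ∀ ⦃B B' : C⦄ (m : B ⟶ B'), M m → D.Evanish f m

end NEx

/-- A two-sided ideal of a preadditive category: a collection of morphisms
containing zero morphisms, closed under addition of parallel morphisms and
under composition on both sides with arbitrary morphisms. -/
def IsCatIdeal {C : Type u} [Category.{v} C] [Preadditive C]
    (I : MorphismProperty C) : Prop :=
  (∀ ⦃A B : C⦄, I (0 : A ⟶ B)) ∧
  (∀ ⦃A B : C⦄ (f g : A ⟶ B), I f → I g → I (f + g)) ∧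
  (∀ ⦃A B D' : C⦄ (f : A ⟶ B) (g : B ⟶ D'), I g → I (f ≫ g)) ∧
  (∀ ⦃A B D' : C⦄ (f : A ⟶ B) (g : B ⟶ D'), I f → I (f ≫ g))

namespace NEx

variable {n : ℕ} {C : Type u} [Category.{v} C] [Preadditive C]

/-- `(I, J)` is an `n`-orthogonal pair of ideals. -/
def OrthPair (D : NEx n C) (I J : MorphismProperty C) : Prop :=
  ∀ ⦃A A' B B' : C⦄ (f : A ⟶ A') (g : B ⟶ B'), I f → J g → D.Evanish f g

/-- `(I, J)` is an `n`-ideal cotorsion pair: an orthogonal pair with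
`I = ^⊥J` and `J = I^⊥`. -/
def CotorsionPair (D : NEx n C) (I J : MorphismProperty C) : Prop :=
  D.OrthPair I J ∧ (∀ ⦃A A' : C⦄ (f : A ⟶ A'), D.leftOrth J f ↔ I f) ∧
    (∀ ⦃B B' : C⦄ (g : B ⟶ B'), D.rightOrth I g ↔ J g)

/-- `F` is an additive subfunctor of `E` (equivalently, an almost `n`-exact
structure): subgroups closed under the functorial actions of `E`. -/
def IsSubfunctor (D : NEx n C) (F : ∀ ⦃X A : C⦄, D.E X A → Prop) : Prop :=
  (∀ ⦃X A : C⦄, F (D.zero : D.E X A)) ∧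
  (∀ ⦃X A : C⦄ (a b : D.E X A), F a → F b → F (D.add a b)) ∧
  (∀ ⦃X A : C⦄ (a : D.E X A), F a → F (D.neg a)) ∧
  (∀ ⦃X X' A : C⦄ (f : X' ⟶ X) (δ : D.E X A), F δ → F (D.pull f δ)) ∧
  (∀ ⦃X A A' : C⦄ (g : A ⟶ A') (δ : D.E X A), F δ → F (D.push g δ))

/-- The ideal `Ph(F)` of `n`-`F`-phantom morphisms: `φ` with `φ^*δ ∈ F`
for every extension `δ` out of the codomain of `φ`. -/
def Ph (D : NEx n C) (F : ∀ ⦃X A : C⦄, D.E X A → Prop) : MorphismProperty C :=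
  fun _ Cc φ => ∀ ⦃A : C⦄ (δ : D.E Cc A), F (D.pull φ δ)

/-- The ideal `CoPh(F)` of `n`-`F`-cophantom morphisms. -/
def CoPh (D : NEx n C) (F : ∀ ⦃X A : C⦄, D.E X A → Prop) : MorphismProperty C :=
  fun A _ g => ∀ ⦃X : C⦄ (δ : D.E X A), F (D.push g δ)

/-- The ideal `F`-inj of `F`-injective morphisms: `g : A ⟶ A'` with
`F(X, g) = 0` for every `X`. -/
def FInj (D : NEx n C) (F : ∀ ⦃X A : C⦄, D.E X A → Prop) : MorphismProperty C :=
  fun A _ g => ∀ ⦃X : C⦄ (δ : D.E X A), F δ → D.push g δ = D.zero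

/-- The ideal `F`-proj of `F`-projective morphisms. -/
def FProj (D : NEx n C) (F : ∀ ⦃X A : C⦄, D.E X A → Prop) : MorphismProperty C :=
  fun _ Cc f => ∀ ⦃A : C⦄ (δ : D.E Cc A), F δ → D.pull f δ = D.zero

/-- The subfunctor `PB(I)` of extensions of the form `f^*δ` with `f ∈ I`. -/
def PB (D : NEx n C) (I : MorphismProperty C) : ∀ ⦃X A : C⦄, D.E X A → Prop :=
  fun X' A δ' => ∃ (X : C) (f : X' ⟶ X) (δ : D.E X A), I f ∧ δ' = D.pull f δ

/-- A projective morphism `p : P ⟶ A` : `E(p, B) = 0` for all `B`. -/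
def ProjMor (D : NEx n C) {P A : C} (p : P ⟶ A) : Prop :=
  ∀ ⦃B : C⦄ (η : D.E A B), D.pull p η = D.zero

/-- An injective morphism `e : K ⟶ X` : `E(B, e) = 0` for all `B`. -/
def InjMor (D : NEx n C) {K X : C} (e : K ⟶ X) : Prop :=
  ∀ ⦃B : C⦄ (η : D.E B K), D.push e η = D.zero

/-- `f` is an `s`-inflation: the first map of some distinguished `n`-exangle. -/
def IsInflation (D : NEx n C) {A B : C} (f : A ⟶ B) : Prop :=
  ∃ (X : ℕ → C) (d : ∀ i, X i ⟶ X (i + 1)) (hA : X 0 = A) (hB : X 1 = B)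
    (δ : D.E (X (n + 1)) (X 0)), D.Dist X d δ ∧
      d 0 = eqToHom hA ≫ f ≫ eqToHom hB.symm

/-- `f` is an `s`-deflation: the last map of some distinguished `n`-exangle. -/
def IsDeflation (D : NEx n C) {A B : C} (f : A ⟶ B) : Prop :=
  ∃ (X : ℕ → C) (d : ∀ i, X i ⟶ X (i + 1)) (hA : X n = A) (hB : X (n + 1) = B)
    (δ : D.E (X (n + 1)) (X 0)), D.Dist X d δ ∧
      d n = eqToHom hA ≫ f ≫ eqToHom hB.symm

/-- `f` is an `F`-inflation: the first map of a distinguished `n`-exangle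
whose extension lies in `F`. -/
def IsFInflation (D : NEx n C) (F : ∀ ⦃X A : C⦄, D.E X A → Prop)
    {A B : C} (f : A ⟶ B) : Prop :=
  ∃ (X : ℕ → C) (d : ∀ i, X i ⟶ X (i + 1)) (hA : X 0 = A) (hB : X 1 = B)
    (δ : D.E (X (n + 1)) (X 0)), D.Dist X d δ ∧ F δ ∧
      d 0 = eqToHom hA ≫ f ≫ eqToHom hB.symm

/-- `i : Yn ⟶ Cc` is a special `I`-precover of `Cc`: a morphism of `I` which is
the deflation of a distinguished `n`-exangle realizing `j_*δ` for some
`δ ∈ E(Cc, A)` and some `j : A ⟶ A'` in `I^⊥`. -/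
def IsSpecialPrecover (D : NEx n C) (I : MorphismProperty C)
    {Yn Cc : C} (i : Yn ⟶ Cc) : Prop :=
  I i ∧ ∃ (A A' : C) (δ : D.E Cc A) (j : A ⟶ A'), D.rightOrth I j ∧
    ∃ (Y : ℕ → C) (d : ∀ k, Y k ⟶ Y (k + 1)) (h0 : Y 0 = A') (hn : Y n = Yn)
      (hc : Y (n + 1) = Cc),
      D.Dist Y d (cast (by rw [h0, hc]) (D.push j δ)) ∧
        d n = eqToHom hn ≫ i ≫ eqToHom hc.symm

/-- `I` is a special precovering ideal. -/
def IsSpecialPrecovering (D : NEx n C) (I : MorphismProperty C) : Prop :=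
  ∀ Cc : C, ∃ (Yn : C) (i : Yn ⟶ Cc), D.IsSpecialPrecover I i

/-- `j : A ⟶ X1` is a special `J`-preenvelope of `A`. -/
def IsSpecialPreenvelope (D : NEx n C) (J : MorphismProperty C)
    {A X1 : C} (j : A ⟶ X1) : Prop :=
  J j ∧ ∃ (Cc Cd : C) (δ : D.E Cd A) (i : Cc ⟶ Cd), D.leftOrth J i ∧
    ∃ (X : ℕ → C) (d : ∀ k, X k ⟶ X (k + 1)) (h0 : X 0 = A) (h1 : X 1 = X1)
      (hc : X (n + 1) = Cc),
      D.Dist X d (cast (by rw [h0, hc]) (D.pull i δ)) ∧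
        d 0 = eqToHom h0 ≫ j ≫ eqToHom h1.symm

/-- `J` is a special preenveloping ideal. -/
def IsSpecialPreenveloping (D : NEx n C) (J : MorphismProperty C) : Prop :=
  ∀ A : C, ∃ (X1 : C) (j : A ⟶ X1), D.IsSpecialPreenvelope J j

/-- `F` has enough injective morphisms. -/
def HasEnoughInjMor (D : NEx n C) (F : ∀ ⦃X A : C⦄, D.E X A → Prop) : Prop :=
  ∀ A : C, ∃ (X : ℕ → C) (d : ∀ i, X i ⟶ X (i + 1)) (h0 : X 0 = A)
    (δ : D.E (X (n + 1)) (X 0)),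
    D.Dist X d δ ∧ F δ ∧ D.FInj F (eqToHom h0.symm ≫ d 0)

/-- `F` has enough special injective morphisms: the distinguished
`n`-`F`-exangle is obtained by base change along an `n`-`F`-phantom morphism. -/
def HasEnoughSpecialInjMor (D : NEx n C)
    (F : ∀ ⦃X A : C⦄, D.E X A → Prop) : Prop :=
  ∀ A : C, ∃ (X : ℕ → C) (d : ∀ i, X i ⟶ X (i + 1)) (h0 : X 0 = A)
    (C' : C) (f : X (n + 1) ⟶ C') (δ : D.E C' (X 0)),
    D.Ph F f ∧ D.Dist X d (D.pull f δ) ∧ D.FInj F (eqToHom h0.symm ≫ d 0)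

/-- `C` has enough projective morphisms: every object is the target of the
deflation of a distinguished `n`-exangle ending in a projective morphism. -/
def HasEnoughProjMor (D : NEx n C) : Prop :=
  ∀ A : C, ∃ (P : ℕ → C) (d : ∀ i, P i ⟶ P (i + 1)) (hA : P (n + 1) = A)
    (δ : D.E (P (n + 1)) (P 0)), D.Dist P d δ ∧ D.ProjMor (d n)

/-- An `s`-injective object: `E(X, E0) = 0` for all `X`. -/
def IsInjObj (D : NEx n C) (E0 : C) : Prop :=
  ∀ ⦃X : C⦄ (x : D.E X E0), x = D.zero

/-- An `s`-projective object: `E(P, A) = 0` for all `A`. -/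
def IsProjObj (D : NEx n C) (P : C) : Prop :=
  ∀ ⦃A : C⦄ (x : D.E P A), x = D.zero

/-- Enough `s`-injective objects. -/
def HasEnoughInjObj (D : NEx n C) : Prop :=
  ∀ A : C, ∃ (X : ℕ → C) (d : ∀ i, X i ⟶ X (i + 1)) (_ : X 0 = A)
    (δ : D.E (X (n + 1)) (X 0)),
    D.Dist X d δ ∧ ∀ k, 1 ≤ k → k ≤ n → D.IsInjObj (X k)

/-- `J` is closed under `n`-extensions by `s`-injective objects. -/
def ClosedExtByInj (D : NEx n C) (J : MorphismProperty C) : Prop :=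
  ∀ ⦃X Y : ℕ → C⦄ ⦃dX : ∀ i, X i ⟶ X (i + 1)⦄ ⦃dY : ∀ i, Y i ⟶ Y (i + 1)⦄
    ⦃δ : D.E (X (n + 1)) (X 0)⦄ ⦃η : D.E (Y (n + 1)) (Y 0)⦄ (f : ∀ k, X k ⟶ Y k),
    D.Dist X dX δ → D.Dist Y dY η →
    (∀ k ≤ n, dX k ≫ f (k + 1) = f k ≫ dY k) →
    D.push (f 0) δ = D.pull (f (n + 1)) η →
    J (f 0) → D.IsInjObj (X (n + 1)) →
    ∀ k, 1 ≤ k → k ≤ n → J (f k)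

/-- `I` is closed under `n`-coextensions by `s`-projective objects. -/
def ClosedCoextByProj (D : NEx n C) (I : MorphismProperty C) : Prop :=
  ∀ ⦃X Y : ℕ → C⦄ ⦃dX : ∀ i, X i ⟶ X (i + 1)⦄ ⦃dY : ∀ i, Y i ⟶ Y (i + 1)⦄
    ⦃δ : D.E (X (n + 1)) (X 0)⦄ ⦃η : D.E (Y (n + 1)) (Y 0)⦄ (f : ∀ k, X k ⟶ Y k),
    D.Dist X dX δ → D.Dist Y dY η →
    (∀ k ≤ n, dX k ≫ f (k + 1) = f k ≫ dY k) →
    D.push (f 0) δ = D.pull (f (n + 1)) η →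
    I (f (n + 1)) → D.IsProjObj (Y 0) →
    ∀ k, 1 ≤ k → k ≤ n → I (f k)

/-- An `E`-triangle `A → B → Cc` realizing `δ`, in an extriangulated
(`1`-exangulated) category. -/
def Tri (D : NEx 1 C) {A B Cc : C} (f : A ⟶ B) (g : B ⟶ Cc)
    (δ : D.E Cc A) : Prop :=
  ∃ (X : ℕ → C) (d : ∀ i, X i ⟶ X (i + 1)) (hA : X 0 = A) (hB : X 1 = B)
    (hC : X (1 + 1) = Cc),
    D.Dist X d (cast (by rw [hA, hC]) δ) ∧
      d 0 = eqToHom hA ≫ f ≫ eqToHom hB.symm ∧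
      d 1 = eqToHom hB ≫ g ≫ eqToHom hC.symm

end NEx

/-- The full setting of Sections 2.2 and 5 of the paper: an extriangulated
category `(C, E, s)` satisfying the condition (WIC), equipped with higher
extension groups `Epow`, and a nicely embedded `n`-cluster tilting subcategory
`T`, which then carries an `n`-exangulated structure `(T, Eⁿ, sⁿ)`. -/
structure NiceSetup (n : ℕ) (C : Type u) [Category.{v} C] [Preadditive C] where
  /-- the underlying extriangulated (`1`-exangulated) category -/
  base : NEx 1 C
  /-- condition (WIC), part 1 -/
  wic_inf : ∀ ⦃X Y Z : C⦄ (f : X ⟶ Y) (g : Y ⟶ Z),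
    base.IsInflation (f ≫ g) → base.IsInflation f
  /-- condition (WIC), part 2 -/
  wic_def : ∀ ⦃X Y Z : C⦄ (f : X ⟶ Y) (g : Y ⟶ Z),
    base.IsDeflation (f ≫ g) → base.IsDeflation g
  /-- the class of objects of the cluster tilting subcategory -/
  T : C → Prop
  /-- higher extension groups `Eⁱ` -/
  Epow : ℕ → C → C → Type v
  EpowZero : ∀ (i : ℕ) (X A : C), Epow i X A
  Epow_one : ∀ X A : C, Epow 1 X A = base.E X A
  /-- cluster tilting: `X ∈ T ↔ Eⁱ(X, T) = 0` for `1 ≤ i ≤ n - 1` -/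
  tilt_right : ∀ X : C, T X ↔ ∀ i, 1 ≤ i → i ≤ n - 1 →
    ∀ ⦃A : C⦄, T A → ∀ x : Epow i X A, x = EpowZero i X A
  /-- cluster tilting: `X ∈ T ↔ Eⁱ(T, X) = 0` for `1 ≤ i ≤ n - 1` -/
  tilt_left : ∀ X : C, T X ↔ ∀ i, 1 ≤ i → i ≤ n - 1 →
    ∀ ⦃A : C⦄, T A → ∀ x : Epow i A X, x = EpowZero i A X
  /-- functorial finiteness: right `T`-approximations, which are deflations -/
  approx_right : ∀ X : C, ∃ (T' : C) (g : T' ⟶ X), T T' ∧ base.IsDeflation g ∧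
    ∀ ⦃T'' : C⦄ (h : T'' ⟶ X), T T'' → ∃ k, k ≫ g = h
  /-- functorial finiteness: left `T`-approximations, which are inflations -/
  approx_left : ∀ X : C, ∃ (T' : C) (g : X ⟶ T'), T T' ∧ base.IsInflation g ∧
    ∀ ⦃T'' : C⦄ (h : X ⟶ T''), T T'' → ∃ k, g ≫ k = h
  /-- nicely embedded, condition (1) -/
  nice_right : ∀ Cc : C,
    (∀ ⦃T' : C⦄, T T' → ∀ x : Epow (n - 1) T' Cc, x = EpowZero (n - 1) T' Cc) →
    ∃ (Dd P : C) (q : Dd ⟶ P) (p : P ⟶ Cc) (δ : base.E Cc Dd),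
      base.IsProjObj P ∧ base.Tri q p δ ∧
        ∀ ⦃T' : C⦄, T T' → ∀ (a b : T' ⟶ Dd), a ≫ q = b ≫ q → a = b
  /-- nicely embedded, condition (2) -/
  nice_left : ∀ A : C,
    (∀ ⦃T' : C⦄, T T' → ∀ x : Epow (n - 1) A T', x = EpowZero (n - 1) A T') →
    ∃ (I S : C) (u : A ⟶ I) (jm : I ⟶ S) (δ : base.E S A),
      base.IsInjObj I ∧ base.Tri u jm δ ∧
        ∀ ⦃T' : C⦄, T T' → ∀ (a b : S ⟶ T'), jm ≫ a = jm ≫ b → a = b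
  /-- the induced `n`-exangulated structure `(T, Eⁿ, sⁿ)` on `T` -/
  Dn : NEx n (ObjectProperty.FullSubcategory T)
  /-- its extension bifunctor is `Eⁿ` -/
  E_eq : ∀ X A : ObjectProperty.FullSubcategory T, Dn.E X A = Epow n X.obj A.obj

open NEx in
/-- Lemma 5.3: in an extriangulated category, for a morphism `(1_A, s, t)` of
`E`-triangles, the right square is a weak pullback. -/
theorem stmt_17 {C : Type u} [Category.{v} C] [Preadditive C]
    (D : NEx 1 C) (X Y : ℕ → C)
    (dX : ∀ k, X k ⟶ X (k + 1)) (dY : ∀ k, Y k ⟶ Y (k + 1))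
    (δ : D.E (X (1 + 1)) (X 0)) (η : D.E (Y (1 + 1)) (Y 0))
    (hX : D.Dist X dX δ) (hY : D.Dist Y dY η)
    (hA : X 0 = Y 0) (f : ∀ k, X k ⟶ Y k)
    (hf0 : f 0 = eqToHom hA)
    (hcomm : ∀ k ≤ 1, dX k ≫ f (k + 1) = f k ≫ dY k)
    (hmor : D.push (f 0) δ = D.pull (f (1 + 1)) η) :
    ∀ ⦃M : C⦄ (i : M ⟶ X (1 + 1)) (j : M ⟶ Y 1),
      i ≫ f (1 + 1) = j ≫ dY 1 →
      ∃ l : M ⟶ X 1, l ≫ f 1 = j ∧ l ≫ dX 1 = i := by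
  intro M i j hij
  have hz1 : D.pull i (D.push (f 0) δ) = D.zero := by
    rw [hmor, D.pull_comp, hij, ← D.pull_comp, D.dist_pull_d hY, D.pull_zero]
  have hδ : δ = D.push (eqToHom hA.symm) (D.push (f 0) δ) := by
    rw [D.push_comp, hf0, eqToHom_trans, eqToHom_refl, D.push_id]
  have hz : D.pull i δ = D.zero := by
    rw [hδ, D.pull_push, hz1, D.push_zero]
  obtain ⟨h, hh⟩ := D.dist_exact_last hX i hz
  have hc1 := hcomm 1 le_rfl
  have hc0 := hcomm 0 (by norm_num)
  have hzero : (h ≫ f 1 - j) ≫ dY 1 = 0 := by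
    rw [Preadditive.sub_comp, Category.assoc, ← hc1, ← Category.assoc, hh, hij, sub_self]
  obtain ⟨q, hq⟩ := D.dist_exact_contra hY 0 (by norm_num) _ hzero
  refine ⟨h - q ≫ eqToHom hA.symm ≫ dX 0, ?_, ?_⟩
  · have : (q ≫ eqToHom hA.symm ≫ dX 0) ≫ f 1 = q ≫ dY 0 := by
      rw [Category.assoc, Category.assoc, hc0, hf0, ← Category.assoc (eqToHom hA.symm),
        eqToHom_trans, eqToHom_refl, Category.id_comp]
    rw [Preadditive.sub_comp, this, hq]
    abel
  · have h01 : dX 0 ≫ dX 1 = 0 := D.dist_d_comp hX 0 (by norm_num)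
    rw [Preadditive.sub_comp, hh, Category.assoc, Category.assoc, h01, Limits.comp_zero,
      Limits.comp_zero, sub_zero]
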